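/- arXiv:2501.10883 — 5 statements merged into one kernel-verified Lean document; each statement's English description precedes it below -/
import Mathlib

section
/- Let p be an odd prime and r ≥ 1, and let R = ℤ/p^rℤ[α] with R/pR ≅ 𝔽_{p²} (p inert). The congruence k² - k + 1 ≡ 0 in R, with k ∉ (ℤ/p^rℤ) (i.e., k not in the image of ℤ/p^rℤ), has exactly 2 solutions if p ≡ 2 (mod 3) and 0 solutions if p ≡ 1 (mod 3). -/
private lemma aux_order_six_root {F : Type*} [Field F] {x : F} (hx : orderOf x = 6) :
    x ^ 2 - x + 1 = 0 := by
  have h6 : x ^ 6 = 1 := by rw [← hx]; exact pow_orderOf_eq_one x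
  have h3 : x ^ 3 = -1 := by
    have h : (x ^ 3 - 1) * (x ^ 3 + 1) = 0 := by linear_combination h6
    rcases mul_eq_zero.mp h with h' | h'
    · exfalso
      have hd : orderOf x ∣ 3 := orderOf_dvd_of_pow_eq_one (by linear_combination h')
      rw [hx] at hd; norm_num at hd
    · linear_combination h'
  have h : (x + 1) * (x ^ 2 - x + 1) = 0 := by linear_combination h3
  rcases mul_eq_zero.mp h with h' | h'
  · exfalso
    have hx2 : x ^ 2 = 1 := by
      have hxe : x = -1 := by linear_combination h'
      rw [hxe]; ring
    have hd : orderOf x ∣ 2 := orderOf_dvd_of_pow_eq_one hx2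
    rw [hx] at hd; norm_num at hd
  · exact h'

private lemma aux_root_order_six {F : Type*} [Field F] (h2 : (2 : F) ≠ 0) (h3 : (3 : F) ≠ 0)
    {x : F} (hx : x ^ 2 - x + 1 = 0) : orderOf x = 6 := by
  have hc : x ^ 3 = -1 := by linear_combination (x + 1) * hx
  have h6 : x ^ 6 = 1 := by linear_combination (x ^ 3 - 1) * hc
  have hdvd : orderOf x ∣ 6 := orderOf_dvd_of_pow_eq_one h6
  have hne0 : orderOf x ≠ 0 := by intro h; rw [h] at hdvd; norm_num at hdvd
  have hne1 : orderOf x ≠ 1 := by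
    intro h
    have h1 := orderOf_eq_one_iff.mp h
    rw [h1] at hx; norm_num at hx
  have hne2 : orderOf x ≠ 2 := by
    intro h
    have hx2 : x ^ 2 = 1 := by rw [← h]; exact pow_orderOf_eq_one x
    exact h3 (by linear_combination (-x - 1) * hx2 + (x + 2) * hx)
  have hne3 : orderOf x ≠ 3 := by
    intro h
    have hx3 : x ^ 3 = 1 := by rw [← h]; exact pow_orderOf_eq_one x
    exact h2 (by linear_combination hc - hx3)
  have hle : orderOf x ≤ 6 := Nat.le_of_dvd (by norm_num) hdvd
  have hcase : orderOf x = 4 ∨ orderOf x = 5 ∨ orderOf x = 6 := by omega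
  rcases hcase with h | h | h
  · exfalso; rw [h] at hdvd; norm_num at hdvd
  · exfalso; rw [h] at hdvd; norm_num at hdvd
  · exact h

private lemma aux_newton_aux {S : Type*} [CommRing S] (h3 : IsUnit (3 : S)) :
    ∀ k : ℕ, ∀ b : S, (b ^ 2 - b + 1) ^ (k + 1) = 0 → ∃ a : S, a ^ 2 - a + 1 = 0 := by
  intro k
  induction k with
  | zero => intro b hb; exact ⟨b, by simpa using hb⟩
  | succ n ih =>
    intro b hb
    have hnil : IsNilpotent (4 * (b ^ 2 - b + 1)) :=
      ⟨n + 2, by rw [mul_pow, hb, mul_zero]⟩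
    have hu2 : IsUnit ((2 * b - 1) ^ 2) := by
      have he : (2 * b - 1) ^ 2 = (-3 : S) + 4 * (b ^ 2 - b + 1) := by ring
      rw [he]
      exact hnil.isUnit_add_left_of_commute h3.neg (Commute.all _ _)
    have hu : IsUnit (2 * b - 1) := (isUnit_pow_iff two_ne_zero).mp hu2
    obtain ⟨u, hu'⟩ := hu
    have huv : (2 * b - 1) * (↑u⁻¹ : S) = 1 := by
      rw [← hu']; exact_mod_cast u.mul_inv
    set v : S := (↑u⁻¹ : S) with hv
    refine ih (b - (b ^ 2 - b + 1) * v) ?_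
    have key : (b - (b ^ 2 - b + 1) * v) ^ 2 - (b - (b ^ 2 - b + 1) * v) + 1
        = (b ^ 2 - b + 1) ^ 2 * v ^ 2 := by
      linear_combination (-(b ^ 2 - b + 1)) * huv
    rw [key]
    have h1 : ((b ^ 2 - b + 1) ^ 2 * v ^ 2) ^ (n + 1)
        = (b ^ 2 - b + 1) ^ (2 * (n + 1)) * v ^ (2 * (n + 1)) := by
      rw [mul_pow, ← pow_mul, ← pow_mul]
    have h2 : 2 * (n + 1) = (n + 2) + n := by ring
    rw [h1, h2, pow_add, hb, zero_mul, zero_mul]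

private lemma aux_newton {S : Type*} [CommRing S] (h3 : IsUnit (3 : S)) {b : S}
    (hb : IsNilpotent (b ^ 2 - b + 1)) : ∃ a : S, a ^ 2 - a + 1 = 0 := by
  obtain ⟨k, hk⟩ := hb
  exact aux_newton_aux h3 k b (by rw [pow_succ, hk, zero_mul])

private lemma aux_exists_order_six {G : Type*} [Group G] [Finite G] [IsCyclic G]
    (h : 6 ∣ Nat.card G) : ∃ g : G, orderOf g = 6 := by
  obtain ⟨g, hg⟩ := IsCyclic.exists_generator (α := G)
  obtain ⟨m, hm⟩ := h
  have hcard : Nat.card G ≠ 0 := Nat.card_pos.ne'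
  have hm0 : m ≠ 0 := by rintro rfl; rw [mul_zero] at hm; exact hcard hm
  have hgo : orderOf g = 6 * m := by
    rw [orderOf_eq_card_of_forall_mem_zpowers hg, hm]
  refine ⟨g ^ m, ?_⟩
  rw [orderOf_pow, hgo, Nat.gcd_eq_right ⟨6, (mul_comm 6 m)⟩,
    Nat.mul_div_cancel 6 (Nat.pos_of_ne_zero hm0)]

private lemma aux_master (p r : ℕ) [hp : Fact p.Prime] (hodd : Odd p) (hr : 1 ≤ r)
    (R : Type) [CommRing R] [Algebra (ZMod (p ^ r)) R]
    (e : (R ⧸ Ideal.span {(p : R)}) ≃+* GaloisField p 2) (hp3 : p ≠ 3) :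
    (∃ a : R, a ^ 2 - a + 1 = 0) ∧
      (∀ a k : R, a ^ 2 - a + 1 = 0 → k ^ 2 - k + 1 = 0 → k = a ∨ k = 1 - a) ∧
      (∀ a : R, a ^ 2 - a + 1 = 0 → a ≠ 1 - a) := by
  set K := GaloisField p 2 with hK
  set I : Ideal R := Ideal.span {(p : R)} with hI
  set q : R →+* R ⧸ I := Ideal.Quotient.mk I with hqdef
  have hpr : (p : R) ^ r = 0 := by
    have h1 : ((p : R)) ^ r = ((p ^ r : ℕ) : R) := by push_cast; ring
    have h2 : ((p ^ r : ℕ) : R) = algebraMap (ZMod (p ^ r)) R ((p ^ r : ℕ) : ZMod (p ^ r)) :=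
      (map_natCast _ _).symm
    rw [h1, h2, ZMod.natCast_self, map_zero]
  have hunit : ∀ x : R, q x ≠ 0 → IsUnit x := by
    intro x hx
    obtain ⟨u, hu⟩ := Ideal.Quotient.mk_surjective (e.symm (e (q x))⁻¹)
    have hex : e (q x) ≠ 0 := fun h => hx (by
      have := congrArg e.symm h
      rwa [RingEquiv.symm_apply_apply, map_zero] at this)
    have hqxu : q (x * u) = 1 := by
      apply e.injective
      rw [map_mul q, map_mul e, map_one]
      rw [show q u = e.symm (e (q x))⁻¹ from hu, RingEquiv.apply_symm_apply,
        mul_inv_cancel₀ hex]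
    have hmem : x * u - 1 ∈ I := by
      rw [← Ideal.Quotient.eq_zero_iff_mem]
      rw [show Ideal.Quotient.mk I (x * u - 1) = q (x * u - 1) from rfl,
        map_sub, hqxu, map_one, sub_self]
    obtain ⟨c, hc⟩ := Ideal.mem_span_singleton.mp hmem
    have hnil : IsNilpotent ((p : R) * c) := ⟨r, by rw [mul_pow, hpr, zero_mul]⟩
    have hxu : IsUnit (x * u) := by
      rw [show x * u = 1 + (p : R) * c by linear_combination hc]
      exact hnil.isUnit_one_add
    exact isUnit_of_mul_isUnit_left hxu
  have hq1 : (1 : R ⧸ I) ≠ 0 := fun h =>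
    one_ne_zero (α := K) (by rw [← map_one e, h, map_zero])
  haveI : Nontrivial (R ⧸ I) := nontrivial_of_ne 1 0 hq1
  have hR1 : (1 : R) ≠ 0 := fun h => hq1 (by rw [← map_one q, h, map_zero])
  haveI : Nontrivial R := nontrivial_of_ne 1 0 hR1
  have h3R : IsUnit (3 : R) := by
    apply hunit
    intro h
    have h3K : (3 : K) = 0 := by
      have he3 : e (q 3) = (3 : K) := by rw [map_ofNat, map_ofNat]
      rw [← he3, h, map_zero]
    have h3K' : ((3 : ℕ) : K) = 0 := by exact_mod_cast h3K
    rw [CharP.cast_eq_zero_iff K p 3] at h3K'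
    exact hp3 ((Nat.prime_dvd_prime_iff_eq hp.out (by norm_num)).mp h3K')
  have hru : ∀ a : R, a ^ 2 - a + 1 = 0 → IsUnit (2 * a - 1) := by
    intro a ha
    have hsq : IsUnit ((2 * a - 1) ^ 2) := by
      rw [show (2 * a - 1) ^ 2 = (-3 : R) + 4 * (a ^ 2 - a + 1) by ring, ha, mul_zero, add_zero]
      exact h3R.neg
    exact (isUnit_pow_iff two_ne_zero).mp hsq
  have hdich : ∀ a k : R, a ^ 2 - a + 1 = 0 → k ^ 2 - k + 1 = 0 → k = a ∨ k = 1 - a := by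
    intro a k ha hk
    have hz : (a - k) * (a + k - 1) = 0 := by linear_combination ha - hk
    have hsum : IsUnit ((a - k) + (a + k - 1)) := by
      rw [show (a - k) + (a + k - 1) = 2 * a - 1 by ring]
      exact hru a ha
    have hnotboth : q (a - k) ≠ 0 ∨ q (a + k - 1) ≠ 0 := by
      by_contra h
      push_neg at h
      have h0 : q ((a - k) + (a + k - 1)) = 0 := by rw [map_add, h.1, h.2, add_zero]
      exact (hsum.map q).ne_zero h0
    rcases hnotboth with h | h
    · right
      have h0 : a + k - 1 = 0 := ((hunit _ h).mul_right_eq_zero).mp hz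
      linear_combination h0
    · left
      have h0 : a - k = 0 := ((hunit _ h).mul_left_eq_zero).mp hz
      linear_combination -h0
  have hane : ∀ a : R, a ^ 2 - a + 1 = 0 → a ≠ 1 - a := by
    intro a ha h
    exact (hru a ha).ne_zero (by linear_combination h)
  refine ⟨?_, hdich, hane⟩
  -- existence of a root in R
  have hp2 : p % 2 = 1 := Nat.odd_iff.mp hodd
  have hp3' : p % 3 ≠ 0 := by
    intro h
    exact hp3 ((Nat.prime_dvd_prime_iff_eq (by norm_num) hp.out).mp
      (Nat.dvd_of_mod_eq_zero h)).symm
  have hcardU : Nat.card Kˣ = p ^ 2 - 1 := by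
    rw [Nat.card_units, GaloisField.card p 2 two_ne_zero]
  have hmod6 : p ^ 2 % 6 = 1 := by
    have h6 : p % 6 = 1 ∨ p % 6 = 5 := by omega
    rcases h6 with h | h <;> rw [Nat.pow_mod, h] <;> norm_num
  have hdvd6 : 6 ∣ p ^ 2 - 1 := by
    have hple : 2 ≤ p := hp.out.two_le
    have hsq : 4 ≤ p ^ 2 := by nlinarith
    generalize hq2 : p ^ 2 = m at hmod6 hsq
    omega
  obtain ⟨ζu, hζu⟩ := aux_exists_order_six (G := Kˣ) (hcardU ▸ hdvd6)
  have hζ : ((ζu : K)) ^ 2 - (ζu : K) + 1 = 0 :=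
    aux_order_six_root (by rw [orderOf_units, hζu])
  obtain ⟨b, hb⟩ := Ideal.Quotient.mk_surjective (e.symm (ζu : K))
  have hqb : e (q b) = (ζu : K) := by
    rw [show q b = e.symm (ζu : K) from hb, RingEquiv.apply_symm_apply]
  have hfb : q (b ^ 2 - b + 1) = 0 := by
    apply e.injective
    rw [map_zero]
    simp only [map_sub, map_add, map_pow, map_one]
    rw [hqb]
    exact hζ
  obtain ⟨c, hc⟩ := Ideal.mem_span_singleton.mp (Ideal.Quotient.eq_zero_iff_mem.mp hfb)
  have hnil : IsNilpotent (b ^ 2 - b + 1) := ⟨r, by rw [hc, mul_pow, hpr, zero_mul]⟩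
  exact aux_newton h3R hnil

private lemma aux_no_base_root (p r : ℕ) [hp : Fact p.Prime] (hodd : Odd p) (hr : 1 ≤ r)
    (R : Type) [CommRing R] [Algebra (ZMod (p ^ r)) R]
    (e : (R ⧸ Ideal.span {(p : R)}) ≃+* GaloisField p 2) (hmod : p % 3 = 2)
    (b₀ : ZMod (p ^ r)) :
    ¬((algebraMap (ZMod (p ^ r)) R b₀) ^ 2 - algebraMap (ZMod (p ^ r)) R b₀ + 1 = 0) := by
  intro hroot
  set K := GaloisField p 2 with hK
  set q : R →+* R ⧸ Ideal.span {(p : R)} := Ideal.Quotient.mk _ with hqdef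
  set φ : ZMod (p ^ r) →+* K :=
    (e : (R ⧸ Ideal.span {(p : R)}) →+* K).comp (q.comp (algebraMap (ZMod (p ^ r)) R))
    with hφ
  set ψ : ZMod p →+* K := ZMod.castHom (dvd_refl p) K with hψ
  set π : ZMod (p ^ r) →+* ZMod p := ZMod.castHom (dvd_pow_self p (by omega)) (ZMod p) with hπ
  have hφχ : φ = ψ.comp π := Subsingleton.elim _ _
  have hφb : φ b₀ ^ 2 - φ b₀ + 1 = 0 := by
    have h := congrArg (fun x : R => e (q x)) hroot
    simp only [map_sub, map_add, map_pow, map_one, map_zero] at h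
    exact h
  have hz : (π b₀) ^ 2 - π b₀ + 1 = 0 := by
    apply ψ.injective
    simp only [map_add, map_sub, map_pow, map_one, map_zero]
    have hb : φ b₀ = ψ (π b₀) := by rw [hφχ]; rfl
    rw [← hb]
    exact hφb
  set z := π b₀ with hzdef
  have hz0 : z ≠ 0 := by intro h; rw [h] at hz; norm_num at hz
  have hp2 : p % 2 = 1 := Nat.odd_iff.mp hodd
  have hge : 2 ≤ p := hp.out.two_le
  have h2 : (2 : ZMod p) ≠ 0 := by
    intro h
    have h' : ((2 : ℕ) : ZMod p) = 0 := by exact_mod_cast h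
    rw [ZMod.natCast_eq_zero_iff] at h'
    have := (Nat.prime_dvd_prime_iff_eq hp.out (by norm_num)).mp h'
    omega
  have h3 : (3 : ZMod p) ≠ 0 := by
    intro h
    have h' : ((3 : ℕ) : ZMod p) = 0 := by exact_mod_cast h
    rw [ZMod.natCast_eq_zero_iff] at h'
    have := (Nat.prime_dvd_prime_iff_eq hp.out (by norm_num)).mp h'
    omega
  have hord : orderOf z = 6 := aux_root_order_six h2 h3 hz
  have hpow : z ^ (p - 1) = 1 := ZMod.pow_card_sub_one_eq_one hz0
  have hdvd : (6 : ℕ) ∣ p - 1 := hord ▸ orderOf_dvd_of_pow_eq_one hpow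
  omega

private lemma aux_base_root_exists (p r : ℕ) [hp : Fact p.Prime] (hodd : Odd p) (hr : 1 ≤ r)
    (hmod : p % 3 = 1) : ∃ b : ZMod (p ^ r), b ^ 2 - b + 1 = 0 := by
  have hp2 : p % 2 = 1 := Nat.odd_iff.mp hodd
  have hge : 2 ≤ p := hp.out.two_le
  have hcard : Nat.card (ZMod p)ˣ = p - 1 := by
    rw [Nat.card_units, Nat.card_zmod]
  have h6 : (6 : ℕ) ∣ p - 1 := by omega
  obtain ⟨u, hu⟩ := aux_exists_order_six (G := (ZMod p)ˣ) (hcard ▸ h6)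
  have hz : ((u : ZMod p)) ^ 2 - (u : ZMod p) + 1 = 0 :=
    aux_order_six_root (by rw [orderOf_units, hu])
  set c := (u : ZMod p).val with hc
  have hcu : ((c : ℕ) : ZMod p) = (u : ZMod p) := by
    rw [hc, ZMod.natCast_val, ZMod.cast_id]
  have hdvd : (p : ℤ) ∣ (c : ℤ) ^ 2 - (c : ℤ) + 1 := by
    rw [← ZMod.intCast_zmod_eq_zero_iff_dvd]
    push_cast
    rw [hcu]
    exact hz
  obtain ⟨m, hm⟩ := hdvd
  have h3u : IsUnit (3 : ZMod (p ^ r)) := by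
    have h : (3 : ZMod (p ^ r)) = ((3 : ℕ) : ZMod (p ^ r)) := by norm_cast
    rw [h, ZMod.isUnit_iff_coprime]
    exact Nat.Coprime.pow_right r ((Nat.coprime_primes (by norm_num) hp.out).mpr (by omega))
  have hnil : IsNilpotent (((c : ℕ) : ZMod (p ^ r)) ^ 2 - ((c : ℕ) : ZMod (p ^ r)) + 1) := by
    refine ⟨r, ?_⟩
    have hcast : (((c : ℕ) : ZMod (p ^ r)) ^ 2 - ((c : ℕ) : ZMod (p ^ r)) + 1)
        = (((c : ℤ) ^ 2 - (c : ℤ) + 1 : ℤ) : ZMod (p ^ r)) := by push_cast; ring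
    have hp0 : ((p : ℕ) : ZMod (p ^ r)) ^ r = 0 := by
      have h1 : ((p : ℕ) : ZMod (p ^ r)) ^ r = ((p ^ r : ℕ) : ZMod (p ^ r)) := by push_cast; ring
      rw [h1, ZMod.natCast_self]
    rw [hcast, hm]
    push_cast
    rw [mul_pow, hp0, zero_mul]
  exact aux_newton h3u hnil

theorem stmt8 (p r : ℕ) (hp : Fact p.Prime) (hodd : Odd p) (hr : 1 ≤ r)
    (R : Type) [CommRing R] [Algebra (ZMod (p ^ r)) R]
    [Module.Free (ZMod (p ^ r)) R] (hrank : Module.finrank (ZMod (p ^ r)) R = 2)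
    (hinert : Nonempty ((R ⧸ Ideal.span {(p : R)}) ≃+* GaloisField p 2)) :
    (p % 3 = 2 → Nat.card {k : R | k ^ 2 - k + 1 = 0 ∧
        k ∉ Set.range (algebraMap (ZMod (p ^ r)) R)} = 2) ∧
    (p % 3 = 1 → Nat.card {k : R | k ^ 2 - k + 1 = 0 ∧
        k ∉ Set.range (algebraMap (ZMod (p ^ r)) R)} = 0) := by
  obtain ⟨e⟩ := hinert
  constructor
  · intro hmod
    have hp3 : p ≠ 3 := by omega
    obtain ⟨⟨a, ha⟩, hdich, hane⟩ := aux_master p r hodd hr R e hp3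
    have hnr := aux_no_base_root p r hodd hr R e hmod
    have hset : {k : R | k ^ 2 - k + 1 = 0 ∧
        k ∉ Set.range (algebraMap (ZMod (p ^ r)) R)} = {a, 1 - a} := by
      ext k
      simp only [Set.mem_setOf_eq, Set.mem_insert_iff, Set.mem_singleton_iff]
      constructor
      · rintro ⟨hk, -⟩
        exact hdich a k ha hk
      · rintro (rfl | rfl)
        · refine ⟨ha, ?_⟩
          rintro ⟨b₀, hb₀⟩
          exact hnr b₀ (by rw [hb₀]; exact ha)
        · refine ⟨by linear_combination ha, ?_⟩
          rintro ⟨b₀, hb₀⟩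
          apply hnr (1 - b₀)
          rw [map_sub, map_one, hb₀]
          linear_combination ha
    rw [hset, Nat.card_coe_set_eq, Set.ncard_pair (hane a ha)]
  · intro hmod
    have hp3 : p ≠ 3 := by omega
    obtain ⟨-, hdich, -⟩ := aux_master p r hodd hr R e hp3
    obtain ⟨b₀, hb₀⟩ := aux_base_root_exists p r hodd hr hmod
    have haroot : (algebraMap (ZMod (p ^ r)) R b₀) ^ 2
        - algebraMap (ZMod (p ^ r)) R b₀ + 1 = 0 := by
      have h := congrArg (algebraMap (ZMod (p ^ r)) R) hb₀
      simpa only [map_sub, map_add, map_pow, map_one, map_zero] using h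
    have hset : {k : R | k ^ 2 - k + 1 = 0 ∧
        k ∉ Set.range (algebraMap (ZMod (p ^ r)) R)} = (∅ : Set R) := by
      ext k
      simp only [Set.mem_setOf_eq, Set.mem_empty_iff_false, iff_false, not_and]
      intro hk hnot
      rcases hdich _ k haroot hk with rfl | rfl
      · exact hnot ⟨b₀, rfl⟩
      · exact hnot ⟨1 - b₀, by rw [map_sub, map_one]⟩
    rw [hset, Nat.card_coe_set_eq, Set.ncard_empty]
end

section
/- Let p be an odd prime and r ≥ 1, and let R = ℤ/p^rℤ[α] be the unramified quadratic extension of ℤ/p^rℤ. The equation k² = -1 has a solution k ∈ R with k not in ℤ/p^rℤ if and only if p ≡ 3 (mod 4), in which case there are exactly 2 such solutions. -/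
/-- Newton/Hensel iteration in a commutative ring with nilpotent error. -/
theorem newton_sqrt_neg_one {S : Type} [CommRing S] (n : ℕ) :
    ∀ x e : S, x ^ 2 + 1 = e → e ^ n = 0 → IsUnit (2 * x) → ∃ y : S, y ^ 2 = -1 := by
  induction n with
  | zero =>
    intro x e hx hn _
    have h1 : (1 : S) = 0 := by simpa using hn
    refine ⟨x, ?_⟩
    have hz : ∀ a : S, a = 0 := fun a => by rw [← mul_one a, h1, mul_zero]
    rw [hz (x ^ 2), hz (-1)]
  | succ n ih =>
    intro x e hx hn h2
    rcases Nat.eq_zero_or_pos n with rfl | hn1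
    · rw [pow_one] at hn
      exact ⟨x, by linear_combination hx + hn⟩
    · obtain ⟨u, hu⟩ := h2.exists_right_inv
      refine ih (x - e * u) ((e * u) ^ 2) ?_ ?_ ?_
      · linear_combination hx - e * hu
      · have h2n : 2 * n = (n + 1) + (n - 1) := by omega
        calc ((e * u) ^ 2) ^ n = e ^ (2 * n) * u ^ (2 * n) := by
              rw [← pow_mul, mul_pow]
          _ = e ^ (n + 1) * e ^ (n - 1) * u ^ (2 * n) := by rw [h2n, pow_add]
          _ = 0 := by rw [hn]; ring
      · have hnil : IsNilpotent (-(2 * (e * u))) := by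
          refine IsNilpotent.neg ⟨n + 1, ?_⟩
          rw [mul_pow, mul_pow, hn]; ring
        have := hnil.isUnit_add_left_of_commute h2 (Commute.all _ _)
        have heq : 2 * x + -(2 * (e * u)) = 2 * (x - e * u) := by ring
        rwa [heq] at this

/-- Lift a unit along a surjective ring hom with nil kernel. -/
theorem isUnit_of_map_unit' {S T : Type} [CommRing S] [CommRing T] (f : S →+* T)
    (hker : ∀ c, f c = 0 → IsNilpotent c) (hsurj : Function.Surjective f)
    (x : S) (hx : IsUnit (f x)) : IsUnit x := by
  obtain ⟨v, hv⟩ := hx.exists_right_inv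
  obtain ⟨y, rfl⟩ := hsurj v
  have h0 : f (x * y - 1) = 0 := by rw [map_sub, map_mul, hv, map_one, sub_self]
  have hnil := hker _ h0
  have hxy : IsUnit (x * y) := by
    have heq : x * y = 1 + (x * y - 1) := by ring
    rw [heq]
    exact hnil.isUnit_add_left_of_commute isUnit_one (Commute.all _ _)
  exact isUnit_of_mul_isUnit_left hxy

theorem stmt9 (p r : ℕ) (hp : Fact p.Prime) (hodd : Odd p) (hr : 1 ≤ r)
    (R : Type) [CommRing R] [Algebra (ZMod (p ^ r)) R]
    [Module.Free (ZMod (p ^ r)) R] (hrank : Module.finrank (ZMod (p ^ r)) R = 2)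
    (hinert : Nonempty ((R ⧸ Ideal.span {(p : R)}) ≃+* GaloisField p 2)) :
    ((∃ k : R, k ^ 2 = -1 ∧ k ∉ Set.range (algebraMap (ZMod (p ^ r)) R)) ↔ p % 4 = 3) ∧
    (p % 4 = 3 → Nat.card {k : R | k ^ 2 = -1 ∧
        k ∉ Set.range (algebraMap (ZMod (p ^ r)) R)} = 2) := by
  obtain ⟨e⟩ := hinert
  have hp0 : p ≠ 0 := hp.out.ne_zero
  have hp2 : p ≠ 2 := by rintro rfl; exact (Nat.not_odd_iff_even.mpr even_two) hodd
  haveI : NeZero (p ^ r) := ⟨pow_ne_zero r hp0⟩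
  haveI : NeZero p := ⟨hp0⟩
  have hpmod : p % 4 = 1 ∨ p % 4 = 3 := by
    have h2 : p % 2 = 1 := Nat.odd_iff.mp hodd
    omega
  -- basic facts about R
  haveI : Nontrivial (R ⧸ Ideal.span {(p : R)}) := e.toEquiv.nontrivial
  haveI : Nontrivial R := (Ideal.Quotient.mk (Ideal.span {(p : R)})).domain_nontrivial
  have hpR : (p : R) ^ r = 0 := by
    have h2 : ((p ^ r : ℕ) : ZMod (p ^ r)) = 0 := ZMod.natCast_self _
    calc (p : R) ^ r = ((p ^ r : ℕ) : R) := by push_cast; ring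
      _ = algebraMap (ZMod (p ^ r)) R ((p ^ r : ℕ) : ZMod (p ^ r)) := by
          rw [map_natCast]
      _ = 0 := by rw [h2, map_zero]
  have hnilspan : ∀ c : R, c ∈ Ideal.span {(p : R)} → IsNilpotent c := by
    intro c hc
    obtain ⟨m, rfl⟩ := Ideal.mem_span_singleton.mp hc
    exact ⟨r, by rw [mul_pow, hpR, zero_mul]⟩
  have hkermk : ∀ c : R, Ideal.Quotient.mk (Ideal.span {(p : R)}) c = 0 → IsNilpotent c :=
    fun c hc => hnilspan c (Ideal.Quotient.eq_zero_iff_mem.mp hc)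
  -- units in R detected in the residue field
  have hunit : ∀ x : R, e (Ideal.Quotient.mk _ x) ≠ 0 → IsUnit x := by
    intro x hx
    refine isUnit_of_map_unit' (Ideal.Quotient.mk _) hkermk Ideal.Quotient.mk_surjective x ?_
    have : IsUnit (e (Ideal.Quotient.mk _ x)) := isUnit_iff_ne_zero.mpr hx
    have := (e.symm : GaloisField p 2 →+* R ⧸ Ideal.span {(p : R)}).isUnit_map this
    simpa using this
  have h2ne : (2 : GaloisField p 2) ≠ 0 := by
    have : ((2 : ℕ) : GaloisField p 2) ≠ 0 := by
      rw [Ne, CharP.cast_eq_zero_iff (GaloisField p 2) p 2]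
      intro h
      exact hp2 ((Nat.prime_dvd_prime_iff_eq hp.out Nat.prime_two).mp h)
    simpa using this
  -- if x^2 = -1 mod p then 2*x is a unit
  have hunit2x : ∀ x : R, Ideal.Quotient.mk (Ideal.span {(p : R)}) (x ^ 2) =
      Ideal.Quotient.mk _ (-1) → IsUnit (2 * x) := by
    intro x hx
    apply hunit
    intro h0
    have hsq : (e (Ideal.Quotient.mk _ (2 * x))) ^ 2 = -4 := by
      rw [← map_pow, ← map_pow]
      have h42 : (2 * x) ^ 2 = 4 * x ^ 2 := by ring
      rw [h42, map_mul, hx, ← map_mul]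
      have h4 : (4 : R) * (-1) = ((-4 : ℤ) : R) := by push_cast; ring
      rw [h4, map_intCast, map_intCast]
      push_cast; ring
    rw [h0] at hsq
    have : (-4 : GaloisField p 2) = 0 := by rw [← hsq]; ring
    have h4 : (4 : GaloisField p 2) = 0 := by linear_combination -this
    have : (2 : GaloisField p 2) * 2 = 0 := by linear_combination h4
    rcases mul_eq_zero.mp this with h | h <;> exact h2ne h
  -- algebraMap is injective
  have hinj : Function.Injective (algebraMap (ZMod (p ^ r)) R) := by
    obtain b := Module.Free.chooseBasis (ZMod (p ^ r)) R
    have hne : Nonempty (Module.Free.ChooseBasisIndex (ZMod (p ^ r)) R) := by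
      by_contra h
      haveI : IsEmpty (Module.Free.ChooseBasisIndex (ZMod (p ^ r)) R) :=
        not_nonempty_iff.mp h
      haveI : Subsingleton R := b.repr.toEquiv.subsingleton
      exact false_of_nontrivial_of_subsingleton R
    obtain ⟨i⟩ := hne
    rw [injective_iff_map_eq_zero]
    intro a ha
    have h1 : a • b i = 0 := by
      have : a • b i = algebraMap (ZMod (p ^ r)) R a * b i := by
        rw [Algebra.smul_def]
      rw [this, ha, zero_mul]
    have h2 : b.repr (a • b i) = 0 := by rw [h1, map_zero]
    rw [map_smul, b.repr_self] at h2
    have := DFunLike.congr_fun h2 i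
    simpa using this
  -- no square root of -1 in ZMod (p^r) when p % 4 = 3
  have castHom : ZMod (p ^ r) →+* ZMod p :=
    ZMod.castHom (dvd_pow_self p (by omega : r ≠ 0)) (ZMod p)
  have hno3 : p % 4 = 3 → ∀ a : ZMod (p ^ r), a ^ 2 ≠ -1 := by
    intro h3 a ha
    have : (castHom a) ^ 2 = -1 := by rw [← map_pow, ha, map_neg, map_one]
    have hs : IsSquare (-1 : ZMod p) := ⟨castHom a, by rw [← this]; ring⟩
    exact (ZMod.exists_sq_eq_neg_one_iff.mp hs) h3
  -- any two square roots of -1 in R differ by sign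
  have hpair : ∀ x y : R, x ^ 2 = -1 → y ^ 2 = -1 → x = y ∨ x = -y := by
    intro x y hx hy
    have h2x : IsUnit (2 * x) := by
      apply hunit2x
      rw [hx]
    have hmul : (x - y) * (x + y) = 0 := by linear_combination hx - hy
    by_cases hin : x - y ∈ Ideal.span {(p : R)}
    · -- then x + y must be a unit (else 2x in span, nilpotent, contra)
      by_cases hin2 : x + y ∈ Ideal.span {(p : R)}
      · exfalso
        have : (2 : R) * x ∈ Ideal.span {(p : R)} := by
          have : (2 : R) * x = (x - y) + (x + y) := by ring
          rw [this]; exact Ideal.add_mem _ hin hin2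
        exact h2x.not_isNilpotent (hnilspan _ this)
      · have hu : IsUnit (x + y) := by
          apply hunit
          intro h0
          apply hin2
          apply Ideal.Quotient.eq_zero_iff_mem.mp
          have := e.injective (a₁ := Ideal.Quotient.mk _ (x + y)) (a₂ := 0)
          rw [map_zero] at this
          exact this h0
        left
        exact sub_eq_zero.mp (hu.mul_left_eq_zero.mp hmul)
    · have hu : IsUnit (x - y) := by
        apply hunit
        intro h0
        apply hin
        apply Ideal.Quotient.eq_zero_iff_mem.mp
        have := e.injective (a₁ := Ideal.Quotient.mk _ (x - y)) (a₂ := 0)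
        rw [map_zero] at this
        exact this h0
      right
      exact eq_neg_of_add_eq_zero_left (hu.mul_right_eq_zero.mp hmul)
  -- existence of a square root of -1 in R
  have hexists : ∃ k : R, k ^ 2 = -1 := by
    haveI : Fintype (GaloisField p 2) := Fintype.ofFinite _
    have hsqGF : IsSquare (-1 : GaloisField p 2) := by
      rw [FiniteField.isSquare_neg_one_iff]
      have hcard : Fintype.card (GaloisField p 2) = p ^ 2 := by
        rw [← Nat.card_eq_fintype_card]
        exact GaloisField.card p 2 (by norm_num)
      rw [hcard]
      have h2 : p % 2 = 1 := Nat.odd_iff.mp hodd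
      have h4 : p ^ 2 % 4 = 1 := by
        rcases (by omega : p % 4 = 1 ∨ p % 4 = 3) with h | h <;>
          rw [sq, Nat.mul_mod, h] <;> norm_num
      omega
    obtain ⟨ξ, hξ⟩ := hsqGF
    obtain ⟨x, hxq⟩ := Ideal.Quotient.mk_surjective (I := Ideal.span {(p : R)}) (e.symm ξ)
    have hmkx : Ideal.Quotient.mk (Ideal.span {(p : R)}) (x ^ 2) = Ideal.Quotient.mk _ (-1) := by
      apply e.injective
      rw [map_pow, hxq, map_pow]
      have h1 : e (Ideal.Quotient.mk (Ideal.span {(p : R)}) (-1)) = -1 := by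
        rw [map_neg, map_neg, map_one, map_one]
      rw [h1]
      have : e (e.symm ξ) = ξ := e.apply_symm_apply ξ
      rw [this]; linear_combination -hξ
    have hmem : x ^ 2 + 1 ∈ Ideal.span {(p : R)} := by
      apply Ideal.Quotient.eq_zero_iff_mem.mp
      rw [map_add, map_one, hmkx, map_neg, map_one, neg_add_cancel]
    obtain ⟨n, hn⟩ := hnilspan _ hmem
    exact newton_sqrt_neg_one n x (x ^ 2 + 1) rfl hn (hunit2x x hmkx)
  -- a square root of -1 in R is a unit, and ≠ its negative
  have hne_neg : ∀ k : R, k ^ 2 = -1 → k ≠ -k := by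
    intro k hk hkk
    have h2k : IsUnit (2 * k) := hunit2x k (by rw [hk])
    have : (2 : R) * k = 0 := by linear_combination hkk
    rw [this] at h2k
    exact h2k.ne_zero rfl
  constructor
  · constructor
    · -- forward: solution outside base forces p % 4 = 3
      rintro ⟨k, hk, hkout⟩
      rcases hpmod with h1 | h3
      · -- p ≡ 1: build sqrt of -1 in ZMod (p^r), contradiction with hkout
        exfalso
        have hsqp : IsSquare (-1 : ZMod p) := ZMod.exists_sq_eq_neg_one_iff.mpr (by omega)
        obtain ⟨b, hb⟩ := hsqp
        have hcast : castHom ((b.val : ZMod (p ^ r))) = b := by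
          rw [map_natCast]
          exact ZMod.natCast_zmod_val b
        have hkerc : ∀ c : ZMod (p ^ r), castHom c = 0 → IsNilpotent c := by
          intro c hc
          have hcv : ((c.val : ℕ) : ZMod (p ^ r)) = c := ZMod.natCast_zmod_val c
          have : ((c.val : ℕ) : ZMod p) = 0 := by
            calc ((c.val : ℕ) : ZMod p) = castHom ((c.val : ℕ) : ZMod (p ^ r)) :=
                  (map_natCast _ _).symm
              _ = castHom c := by rw [hcv]
              _ = 0 := hc
          have hdvd : p ∣ c.val := (ZMod.natCast_eq_zero_iff _ _).mp this
          refine ⟨r, ?_⟩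
          rw [← hcv, ← Nat.cast_pow, ZMod.natCast_eq_zero_iff]
          exact pow_dvd_pow_of_dvd hdvd r
        -- 2 * a0 is a unit in ZMod (p^r)
        have hsurjc : Function.Surjective castHom := by
          intro y
          exact ⟨(y.val : ZMod (p ^ r)), by rw [map_natCast]; exact ZMod.natCast_zmod_val y⟩
        have h2p : (2 : ZMod p) ≠ 0 := by
          have : ((2 : ℕ) : ZMod p) ≠ 0 := by
            rw [Ne, ZMod.natCast_eq_zero_iff]
            intro h
            exact hp2 ((Nat.prime_dvd_prime_iff_eq hp.out Nat.prime_two).mp h)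
          simpa using this
        have hbne : b ≠ 0 := by
          intro h0
          rw [h0, mul_zero] at hb
          exact one_ne_zero (by linear_combination -hb : (1 : ZMod p) = 0)
        have h2a : IsUnit (2 * (b.val : ZMod (p ^ r))) := by
          apply isUnit_of_map_unit' castHom hkerc hsurjc
          rw [map_mul, hcast]
          apply isUnit_iff_ne_zero.mpr
          apply mul_ne_zero _ hbne
          have : castHom 2 = 2 := by rw [map_ofNat]
          rw [this]; exact h2p
        have herr : ∃ m : ℕ, ((b.val : ZMod (p ^ r)) ^ 2 + 1) ^ m = 0 := by
          have : castHom ((b.val : ZMod (p ^ r)) ^ 2 + 1) = 0 := by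
            rw [map_add, map_pow, hcast, map_one]
            rw [sq]
            linear_combination -hb
          obtain ⟨m, hm⟩ := hkerc _ this
          exact ⟨m, hm⟩
        obtain ⟨m, hm⟩ := herr
        obtain ⟨a, ha⟩ := newton_sqrt_neg_one m ((b.val : ZMod (p ^ r)))
          ((b.val : ZMod (p ^ r)) ^ 2 + 1) rfl hm h2a
        -- algebraMap a is a square root of -1 in R, so k = ± algebraMap a ∈ range
        have haR : (algebraMap (ZMod (p ^ r)) R a) ^ 2 = -1 := by
          rw [← map_pow, ha, map_neg, map_one]
        rcases hpair k _ hk haR with h | h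
        · exact hkout ⟨a, h.symm⟩
        · exact hkout ⟨-a, by rw [map_neg, ← h]⟩
      · exact h3
    · -- backward: p % 4 = 3 gives a solution outside base
      intro h3
      obtain ⟨k, hk⟩ := hexists
      refine ⟨k, hk, ?_⟩
      rintro ⟨a, rfl⟩
      have : a ^ 2 = -1 := by
        apply hinj
        rw [map_pow, hk, map_neg, map_one]
      exact hno3 h3 a this
  · -- count
    intro h3
    obtain ⟨k, hk⟩ := hexists
    have hkout : k ∉ Set.range (algebraMap (ZMod (p ^ r)) R) := by
      rintro ⟨a, rfl⟩
      have : a ^ 2 = -1 := by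
        apply hinj
        rw [map_pow, hk, map_neg, map_one]
      exact hno3 h3 a this
    have hset : {k' : R | k' ^ 2 = -1 ∧
        k' ∉ Set.range (algebraMap (ZMod (p ^ r)) R)} = {k, -k} := by
      ext x
      simp only [Set.mem_setOf_eq, Set.mem_insert_iff, Set.mem_singleton_iff]
      constructor
      · rintro ⟨hx, _⟩
        exact hpair x k hx hk
      · rintro (rfl | rfl)
        · exact ⟨hk, hkout⟩
        · refine ⟨by rw [neg_sq, hk], ?_⟩
          rintro ⟨a, ha⟩
          exact hkout ⟨-a, by rw [map_neg, ha, neg_neg]⟩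
    rw [hset, Nat.card_coe_set_eq, Set.ncard_pair (hne_neg k hk)]
end

section
/- For M, N ≥ 1, the index of the subgroup H = { [[1, Mb],[0, d]] : b ∈ ℤ/MNℤ, d ∈ (ℤ/MNℤ)^× } in GL₂(ℤ/MNℤ) equals M³N² · ∏_{p | MN} (1 - 1/p²). -/
open Matrix Finset Function

lemma card_preimage {G H : Type*} [AddGroup G] [AddGroup H] (φ : G →+ H)
    (hφ : Function.Surjective φ) (S : Set H) :
    Nat.card (φ ⁻¹' S) = Nat.card {x : G // φ x = 0} * Nat.card S := by
  have key : ∀ p : {x : G // φ x = 0} × S, φ (p.1.1 + surjInv hφ p.2.1) = p.2.1 := by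
    intro p; simp [p.1.2, surjInv_eq hφ]
  have e : (φ ⁻¹' S) ≃ {x : G // φ x = 0} × S :=
    { toFun := fun g => (⟨g.1 - surjInv hφ (φ g.1), by simp [surjInv_eq hφ]⟩, ⟨φ g.1, g.2⟩)
      invFun := fun p => ⟨p.1.1 + surjInv hφ p.2.1, by
        rw [Set.mem_preimage, key]; exact p.2.2⟩
      left_inv := fun g => by simp
      right_inv := fun p => by
        have h1 := key p
        ext
        · simp [h1, p.1.2]
        · simp [h1] }
  rw [Nat.card_congr e, Nat.card_prod]

def matrixProdEquiv (R S : Type*) [Ring R] [Ring S] :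
    Matrix (Fin 2) (Fin 2) (R × S) ≃+* Matrix (Fin 2) (Fin 2) R × Matrix (Fin 2) (Fin 2) S where
  toFun A := (A.map Prod.fst, A.map Prod.snd)
  invFun B := Matrix.of fun i j => (B.1 i j, B.2 i j)
  left_inv A := by ext i j : 2 <;> rfl
  right_inv B := by
    refine Prod.ext ?_ ?_ <;> ext i j <;> rfl
  map_add' A B := by
    refine Prod.ext ?_ ?_ <;> ext i j <;> rfl
  map_mul' A B := by
    refine Prod.ext ?_ ?_ <;> ext i j <;>
      simp [Matrix.mul_apply]

noncomputable def unitsEquivIsUnit {M : Type*} [Monoid M] : Mˣ ≃ {x : M // IsUnit x} where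
  toFun u := ⟨u, u.isUnit⟩
  invFun x := x.2.unit
  left_inv u := Units.ext rfl
  right_inv x := rfl

lemma zmod_cast_surj (p k : ℕ) [NeZero p] (h : p ∣ p ^ k) :
    Function.Surjective (ZMod.castHom h (ZMod p)) := by
  intro y
  refine ⟨(y.val : ZMod (p ^ k)), ?_⟩
  rw [map_natCast, ZMod.natCast_val, ZMod.cast_id]

lemma card_GL_zmod_prime_pow (p k : ℕ) (hp : p.Prime) (hk : 0 < k) :
    (Nat.card (GL (Fin 2) (ZMod (p ^ k))) : ℚ) =
      ((p : ℚ) ^ k) ^ 4 * ((1 - 1/(p:ℚ)) * (1 - 1/(p:ℚ)^2)) := by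
  have : Fact p.Prime := ⟨hp⟩
  have hdvd : p ∣ p ^ k := dvd_pow_self p hk.ne'
  set f := ZMod.castHom hdvd (ZMod p) with hf
  have hfs : Function.Surjective f := zmod_cast_surj p k hdvd
  -- cardinality of kernel of f
  have hker : Nat.card {x : ZMod (p ^ k) // f x = 0} * p = p ^ k := by
    have h2 := card_preimage f.toAddMonoidHom hfs Set.univ
    simp only [Set.preimage_univ, RingHom.toAddMonoidHom_eq_coe, AddMonoidHom.coe_coe,
      Nat.card_univ] at h2
    rw [Nat.card_eq_fintype_card, Nat.card_eq_fintype_card, Nat.card_eq_fintype_card,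
      ZMod.card, ZMod.card] at h2
    rw [Nat.card_eq_fintype_card]
    omega
  -- unit iff unit after cast
  have hunit : ∀ x : ZMod (p ^ k), IsUnit x ↔ IsUnit (f x) := by
    intro x
    have hx : x = (x.val : ZMod (p ^ k)) := by rw [ZMod.natCast_val, ZMod.cast_id]
    rw [hx, map_natCast, ZMod.isUnit_iff_coprime, ZMod.isUnit_iff_coprime,
      Nat.coprime_pow_right_iff hk]
  set F := f.mapMatrix (m := Fin 2) with hF
  have hFs : Function.Surjective F := by
    intro B
    refine ⟨Matrix.of fun i j => surjInv hfs (B i j), ?_⟩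
    ext i j
    exact surjInv_eq hfs _
  have hdet : ∀ A : Matrix (Fin 2) (Fin 2) (ZMod (p ^ k)), IsUnit A.det ↔ IsUnit (F A).det := by
    intro A
    rw [hF, ← RingHom.map_det]
    exact hunit A.det
  -- reduce GL card to matrix set cards
  have e1 : GL (Fin 2) (ZMod (p ^ k)) ≃ (F ⁻¹' {B | IsUnit B.det}) :=
    unitsEquivIsUnit.trans (Equiv.subtypeEquivRight (fun A =>
      (Matrix.isUnit_iff_isUnit_det A).trans (hdet A)))
  have e2 : GL (Fin 2) (ZMod p) ≃ {B : Matrix (Fin 2) (Fin 2) (ZMod p) // IsUnit B.det} :=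
    unitsEquivIsUnit.trans (Equiv.subtypeEquivRight (fun A => Matrix.isUnit_iff_isUnit_det A))
  have hcard := card_preimage F.toAddMonoidHom hFs {B | IsUnit B.det}
  simp only [RingHom.toAddMonoidHom_eq_coe, AddMonoidHom.coe_coe] at hcard
  rw [← Nat.card_congr e1] at hcard
  rw [Set.coe_setOf, ← Nat.card_congr e2] at hcard
  -- kernel of F
  have eker : {A : Matrix (Fin 2) (Fin 2) (ZMod (p ^ k)) // F A = 0} ≃
      (Fin 2 → Fin 2 → {x : ZMod (p ^ k) // f x = 0}) := by
    refine (Equiv.subtypeEquivRight ?_).trans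
      ((Equiv.subtypePiEquivPi).trans (Equiv.piCongrRight fun i => Equiv.subtypePiEquivPi))
    intro A
    rw [hF, RingHom.mapMatrix_apply]
    constructor
    · intro h i j
      rw [← Matrix.map_apply (f := ⇑f), h]
      rfl
    · intro h
      ext i j
      exact h i j
  rw [Nat.card_congr eker] at hcard
  rw [Nat.card_fun, Nat.card_fun, Nat.card_eq_fintype_card (α := Fin 2), Fintype.card_fin] at hcard
  -- card of GL over the field
  have hfield : Nat.card (GL (Fin 2) (ZMod p)) = (p ^ 2 - 1) * (p ^ 2 - p) := by
    rw [Matrix.card_GL_field, Fin.prod_univ_two]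
    simp [ZMod.card]
  rw [hfield] at hcard
  set c := Nat.card {x : ZMod (p ^ k) // f x = 0} with hc
  -- now pure arithmetic
  have hp1 : 1 < p := hp.one_lt
  have hpQ : (p : ℚ) ≠ 0 := by positivity
  have hQker : (c : ℚ) * p = (p : ℚ) ^ k := by exact_mod_cast congrArg (Nat.cast (R := ℚ)) hker
  rw [hcard]
  have h1 : (1:ℕ) ≤ p ^ 2 := Nat.one_le_pow _ _ hp.pos
  have h2 : p ≤ p ^ 2 := by nlinarith
  push_cast [h1, h2]
  have hcQ : (c:ℚ) = (p:ℚ) ^ k / p := by field_simp [← hQker]; exact hQker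
  rw [hcQ]
  field_simp

lemma card_GL_zmod (n : ℕ) :
    1 ≤ n → (Nat.card (GL (Fin 2) (ZMod n)) : ℚ) =
      (n : ℚ) ^ 4 * ∏ p ∈ n.primeFactors, ((1 - 1/(p:ℚ)) * (1 - 1/(p:ℚ)^2)) := by
  induction n using Nat.recOnPosPrimePosCoprime with
  | prime_pow p k hp hk =>
      intro _
      have hp' : p.Prime := hp
      rw [card_GL_zmod_prime_pow p k hp' hk,
        Nat.primeFactors_pow _ hk.ne', Nat.Prime.primeFactors hp', Finset.prod_singleton]
      push_cast
      ring
  | zero => intro h; omega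
  | one =>
      intro _
      have : Fintype.card (GL (Fin 2) (ZMod 1)) = 1 :=
        Fintype.card_eq_one_of_forall_eq (i := 1) (fun u => Units.ext (Subsingleton.elim _ _))
      rw [Nat.card_eq_fintype_card, this]
      simp
  | coprime a b ha hb hab iha ihb =>
      intro _
      have e : GL (Fin 2) (ZMod (a * b)) ≃* GL (Fin 2) (ZMod a) × GL (Fin 2) (ZMod b) :=
        (Units.mapEquiv ((ZMod.chineseRemainder hab).mapMatrix.toMulEquiv)).trans
          ((Units.mapEquiv (matrixProdEquiv (ZMod a) (ZMod b)).toMulEquiv).trans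
            MulEquiv.prodUnits)
      rw [Nat.card_congr e.toEquiv, Nat.card_prod, Nat.cast_mul,
        iha (by omega), ihb (by omega),
        Nat.primeFactors_mul (by omega) (by omega),
        Finset.prod_union (Nat.Coprime.disjoint_primeFactors hab)]
      push_cast
      ring

lemma unit_entry {n : ℕ} (g : GL (Fin 2) (ZMod n))
    (h00 : (g : Matrix (Fin 2) (Fin 2) (ZMod n)) 0 0 = 1)
    (h10 : (g : Matrix (Fin 2) (Fin 2) (ZMod n)) 1 0 = 0) :
    IsUnit ((g : Matrix (Fin 2) (Fin 2) (ZMod n)) 1 1) := by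
  have h := (Matrix.isUnit_iff_isUnit_det _).mp g.isUnit
  rwa [Matrix.det_fin_two, h00, h10, one_mul, mul_zero, sub_zero] at h

noncomputable def mkH {n : ℕ} (a : ZMod n) (d : (ZMod n)ˣ) : GL (Fin 2) (ZMod n) :=
  ((Matrix.isUnit_iff_isUnit_det !![1, a; 0, (d : ZMod n)]).mpr
    (by rw [Matrix.det_fin_two_of]; simpa using d.isUnit)).unit

lemma mkH_coe {n : ℕ} (a : ZMod n) (d : (ZMod n)ˣ) :
    (mkH a d : Matrix (Fin 2) (Fin 2) (ZMod n)) = !![1, a; 0, (d : ZMod n)] :=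
  IsUnit.unit_spec _

lemma card_H (M N : ℕ) (hM : 1 ≤ M) (hN : 1 ≤ N) :
    Nat.card {g : GL (Fin 2) (ZMod (M * N)) |
        (g : Matrix (Fin 2) (Fin 2) (ZMod (M * N))) 0 0 = 1 ∧
        (g : Matrix (Fin 2) (Fin 2) (ZMod (M * N))) 1 0 = 0 ∧
        ∃ b : ZMod (M * N),
          (g : Matrix (Fin 2) (Fin 2) (ZMod (M * N))) 0 1 = (M : ZMod (M * N)) * b}
      = N * Nat.totient (M * N) := by
  haveI : NeZero (M * N) := ⟨by positivity⟩
  haveI : NeZero N := ⟨by omega⟩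
  have e : {g : GL (Fin 2) (ZMod (M * N)) |
        (g : Matrix (Fin 2) (Fin 2) (ZMod (M * N))) 0 0 = 1 ∧
        (g : Matrix (Fin 2) (Fin 2) (ZMod (M * N))) 1 0 = 0 ∧
        ∃ b : ZMod (M * N),
          (g : Matrix (Fin 2) (Fin 2) (ZMod (M * N))) 0 1 = (M : ZMod (M * N)) * b}
      ≃ ZMod N × (ZMod (M * N))ˣ := by
    refine
      { toFun := fun g =>
          (((((g : GL (Fin 2) (ZMod (M * N))) :
              Matrix (Fin 2) (Fin 2) (ZMod (M * N))) 0 1).val / M : ℕ),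
            (unit_entry g.1 g.2.1 g.2.2.1).unit)
        invFun := fun p => ⟨mkH ((M * p.1.val : ℕ) : ZMod (M * N)) p.2, ?_, ?_, ?_⟩
        left_inv := ?_
        right_inv := ?_ }
    · rw [mkH_coe]; rfl
    · rw [mkH_coe]; rfl
    · refine ⟨((p.1.val : ℕ) : ZMod (M * N)), ?_⟩
      rw [mkH_coe]
      show ((M * p.1.val : ℕ) : ZMod (M * N)) = _
      push_cast
      ring
    · rintro ⟨g, h00, h10, b, h01⟩
      have hdvd : M ∣ ((g : Matrix (Fin 2) (Fin 2) (ZMod (M * N))) 0 1).val := by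
        have : (g : Matrix (Fin 2) (Fin 2) (ZMod (M * N))) 0 1 =
            ((M * b.val : ℕ) : ZMod (M * N)) := by
          rw [h01]; push_cast [ZMod.natCast_val, ZMod.cast_id]; ring
        rw [this, ZMod.val_natCast]
        exact (Nat.dvd_mod_iff ⟨N, rfl⟩).mpr ⟨b.val, rfl⟩
      set v := ((g : Matrix (Fin 2) (Fin 2) (ZMod (M * N))) 0 1).val with hv
      have hvlt : v < M * N := ZMod.val_lt _
      have htlt : v / M < N := Nat.div_lt_of_lt_mul hvlt
      have hval : ((v / M : ℕ) : ZMod N).val = v / M := ZMod.val_cast_of_lt htlt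
      apply Subtype.ext
      apply Units.ext
      rw [mkH_coe]
      show _ = (g : Matrix (Fin 2) (Fin 2) (ZMod (M * N)))
      ext i j
      fin_cases i <;> fin_cases j
      · simpa using h00.symm
      · have h2 : ((M * (((v / M : ℕ) : ZMod N)).val : ℕ) : ZMod (M * N)) =
            (g : Matrix (Fin 2) (Fin 2) (ZMod (M * N))) 0 1 := by
          rw [hval, Nat.mul_div_cancel' hdvd, hv, ZMod.natCast_val, ZMod.cast_id]
        simpa using h2
      · simpa using h10.symm
      · simpa using (IsUnit.unit_spec (unit_entry g h00 h10))
    · rintro ⟨x, d⟩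
      have hxlt : x.val < N := ZMod.val_lt x
      have hlt : M * x.val < M * N := by
        exact Nat.mul_lt_mul_of_le_of_lt (le_refl M) hxlt (by omega)
      refine Prod.ext ?_ ?_
      · show ((((mkH _ d : GL (Fin 2) (ZMod (M * N))) :
            Matrix (Fin 2) (Fin 2) (ZMod (M * N))) 0 1).val / M : ℕ) = (x : ZMod N)
        rw [mkH_coe]
        show (((((M * x.val : ℕ) : ZMod (M * N))).val / M : ℕ) : ZMod N) = x
        rw [ZMod.val_natCast, Nat.mod_eq_of_lt hlt, Nat.mul_div_cancel_left _ (by omega),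
          ZMod.natCast_val, ZMod.cast_id]
      · apply Units.ext
        show ((mkH _ d : GL (Fin 2) (ZMod (M * N))) :
            Matrix (Fin 2) (Fin 2) (ZMod (M * N))) 1 1 = (d : ZMod (M * N))
        rw [mkH_coe]
        rfl
  rw [Nat.card_congr e, Nat.card_prod, Nat.card_eq_fintype_card, Nat.card_eq_fintype_card,
    ZMod.card, ZMod.card_units_eq_totient]


theorem stmt10 (M N : ℕ) (hM : 1 ≤ M) (hN : 1 ≤ N) :
    (Nat.card (GL (Fin 2) (ZMod (M * N))) : ℚ) =
      (Nat.card {g : GL (Fin 2) (ZMod (M * N)) |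
          (g : Matrix (Fin 2) (Fin 2) (ZMod (M * N))) 0 0 = 1 ∧
          (g : Matrix (Fin 2) (Fin 2) (ZMod (M * N))) 1 0 = 0 ∧
          ∃ b : ZMod (M * N),
            (g : Matrix (Fin 2) (Fin 2) (ZMod (M * N))) 0 1 = (M : ZMod (M * N)) * b} : ℚ) *
        ((M : ℚ) ^ 3 * (N : ℚ) ^ 2 * ∏ p ∈ (M * N).primeFactors, (1 - 1 / (p : ℚ) ^ 2)) := by
  rw [card_GL_zmod (M * N) (Nat.one_le_iff_ne_zero.mpr (by positivity)), card_H M N hM hN]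
  push_cast
  rw [Nat.totient_eq_mul_prod_factors, Finset.prod_mul_distrib]
  simp only [one_div]
  push_cast
  ring
end

section
/- Let M, N ≥ 1 with MN ≥ 5. Fix c ∈ ℤ/MNℤ with gcd(c, MN) = d. The number of a ∈ ℤ with 0 ≤ a < gcd(Mc, MN) and gcd(a, c, MN) = 1 equals φ(d) · gcd(M, MN/d). -/
lemma count_coprime_range_mul (d n : ℕ) :
    ((Finset.range (n * d)).filter (fun a => Nat.gcd a d = 1)).card =
      n * Nat.totient d := by
  induction n with
  | zero => simp
  | succ n ih =>
    have h1 : Finset.range ((n + 1) * d) =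
        Finset.range (n * d) ∪ Finset.Ico (n * d) (n * d + d) := by
      simp only [Finset.range_eq_Ico]
      rw [show (n + 1) * d = n * d + d by ring]
      exact (Finset.Ico_union_Ico_eq_Ico (Nat.zero_le _) (Nat.le_add_right _ _)).symm
    rw [h1, Finset.filter_union, Finset.card_union_of_disjoint]
    · have h2 : (Finset.Ico (n * d) (n * d + d)).filter (fun a => Nat.gcd a d = 1)
          = (Finset.Ico (n * d) (n * d + d)).filter (d.Coprime) := by
        apply Finset.filter_congr
        intro x _
        simp [Nat.Coprime, Nat.gcd_comm]
      rw [ih, h2, Nat.filter_coprime_Ico_eq_totient]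
      ring
    · apply Finset.disjoint_filter_filter
      rw [Finset.range_eq_Ico]
      exact Finset.Ico_disjoint_Ico_consecutive 0 (n * d) (n * d + d)

theorem stmt12 (M N c : ℕ) (hM : 1 ≤ M) (hN : 1 ≤ N) (hMN : 5 ≤ M * N)
    (hc : c < M * N) (d : ℕ) (hd : d = Nat.gcd c (M * N)) :
    ((Finset.range (Nat.gcd (M * c) (M * N))).filter
        (fun a => Nat.gcd a (Nat.gcd c (M * N)) = 1)).card =
      Nat.totient d * Nat.gcd M (M * N / d) := by
  have hdvd : d ∣ M * N := hd ▸ Nat.gcd_dvd_right _ _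
  have hd0 : 0 < d := by
    rw [hd]; exact Nat.gcd_pos_of_pos_right _ (by omega)
  obtain ⟨m, hm⟩ := hdvd
  have hmval : M * N / d = m := by rw [hm]; exact Nat.mul_div_cancel_left _ hd0
  have h1 : Nat.gcd d N = Nat.gcd c N := by
    rw [hd, Nat.gcd_assoc]
    congr 1
    exact Nat.gcd_eq_right ⟨M, mul_comm M N⟩
  have hg : Nat.gcd (M * c) (M * N) = d * Nat.gcd M (M * N / d) := by
    calc Nat.gcd (M * c) (M * N) = M * Nat.gcd c N := Nat.gcd_mul_left M c N
      _ = M * Nat.gcd d N := by rw [h1]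
      _ = Nat.gcd (M * d) (M * N) := (Nat.gcd_mul_left M d N).symm
      _ = Nat.gcd (d * M) (d * m) := by rw [mul_comm M d, hm]
      _ = d * Nat.gcd M m := Nat.gcd_mul_left d M m
      _ = d * Nat.gcd M (M * N / d) := by rw [hmval]
  rw [← hd, hg, mul_comm d, count_coprime_range_mul, mul_comm]
end

section
/- Let p ≥ 5 be prime. Then 1 + p(p²-1)/288 - (p - (-1/p))/16 - (p - (-3/p))/9 - (p²-1)/48 computes the genus of X_{S₄}(p) via the Riemann–Hurwitz genus formula g = 1 + i/12 - ε₂/4 - ε₃/3 - ε_∞/2 with i = p(p²-1)/24, ε₂ = (p - (-1/p))/4, ε₃ = (p - (-3/p))/3, ε_∞ = (p²-1)/24, and this quantity is a nonnegative integer. -/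
lemma leg_neg_one_eq_one {p : ℕ} [Fact p.Prime] (h : p % 4 = 1) :
    legendreSym p (-1) = 1 := by
  rw [legendreSym.at_neg_one (by omega), ZMod.χ₄_nat_one_mod_four h]

lemma leg_neg_one_eq_neg_one {p : ℕ} [Fact p.Prime] (h : p % 4 = 3) :
    legendreSym p (-1) = -1 := by
  rw [legendreSym.at_neg_one (by omega), ZMod.χ₄_nat_three_mod_four h]

lemma leg_neg_three_eq {p : ℕ} [Fact p.Prime] (hp : p ≠ 2) :
    legendreSym p (-3) = legendreSym 3 (p : ℤ) := by
  have h2 : p % 2 = 1 := Nat.Prime.eq_two_or_odd (Fact.out) |>.resolve_left hp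
  have key := @legendreSym.quadratic_reciprocity' 3 p _ _ (by norm_num) hp
  push_cast at key
  rw [show (-3 : ℤ) = -1 * 3 by norm_num, legendreSym.mul, legendreSym.at_neg_one hp, key,
    ZMod.χ₄_eq_neg_one_pow h2]
  norm_num
  rw [← mul_assoc, ← pow_add]
  have h : (p/2 + p/2) = 2 * (p/2) := by omega
  rw [h, pow_mul]
  norm_num

lemma leg_neg_three_eq_one {p : ℕ} [Fact p.Prime] (hp : p ≠ 2) (h : p % 3 = 1) :
    legendreSym p (-3) = 1 := by
  rw [leg_neg_three_eq hp, legendreSym.mod, show ((p:ℤ) % ((3:ℕ):ℤ)) = 1 by push_cast; omega]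
  decide

lemma leg_neg_three_eq_neg_one {p : ℕ} [Fact p.Prime] (hp : p ≠ 2) (h : p % 3 = 2) :
    legendreSym p (-3) = -1 := by
  rw [leg_neg_three_eq hp, legendreSym.mod, show ((p:ℤ) % ((3:ℕ):ℤ)) = 2 by push_cast; omega]
  decide

theorem stmt13 (p : ℕ) [Fact p.Prime] (hp : 5 ≤ p) :
    ∀ i e2 e3 einf : ℚ,
      i = p * ((p : ℚ) ^ 2 - 1) / 24 →
      e2 = ((p : ℚ) - legendreSym p (-1)) / 4 →
      e3 = ((p : ℚ) - legendreSym p (-3)) / 3 →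
      einf = ((p : ℚ) ^ 2 - 1) / 24 →
      (1 + p * ((p : ℚ) ^ 2 - 1) / 288 - ((p : ℚ) - legendreSym p (-1)) / 16 -
          ((p : ℚ) - legendreSym p (-3)) / 9 - ((p : ℚ) ^ 2 - 1) / 48 =
        1 + i / 12 - e2 / 4 - e3 / 3 - einf / 2) ∧
      ∃ g : ℕ, (g : ℚ) = 1 + i / 12 - e2 / 4 - e3 / 3 - einf / 2 := by
  intro i e2 e3 einf hi h2 h3 hinf
  subst hi h2 h3 hinf
  refine ⟨by ring, ?_⟩
  have hpp : p.Prime := Fact.out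
  have hp2 : p % 2 = 1 := hpp.eq_two_or_odd.resolve_left (by omega)
  have hp3 : ¬ (3 ∣ p) := by
    intro h
    have := (Nat.prime_dvd_prime_iff_eq (by norm_num) hpp).mp h
    omega
  have hp3' : p % 3 ≠ 0 := fun h => hp3 (Nat.dvd_of_mod_eq_zero h)
  have hne2 : p ≠ 2 := by omega
  have hr : p % 24 = 1 ∨ p % 24 = 5 ∨ p % 24 = 7 ∨ p % 24 = 11 ∨ p % 24 = 13 ∨
      p % 24 = 17 ∨ p % 24 = 19 ∨ p % 24 = 23 := by omega
  rcases hr with h | h | h | h | h | h | h | h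
  · obtain ⟨k, rfl⟩ : ∃ k, p = 24*k + 25 := ⟨p/24 - 1, by omega⟩
    rw [leg_neg_one_eq_one (by omega), leg_neg_three_eq_one hne2 (by omega)]
    exact ⟨48*k^3 + 138*k^2 + 127*k + 38, by push_cast; ring⟩
  · rcases Nat.eq_zero_or_pos ((p - 5) / 24) with _ | _
    all_goals rcases eq_or_ne p 5 with rfl | hne5
    · rw [leg_neg_one_eq_one (by omega), leg_neg_three_eq_neg_one hne2 (by omega)]
      exact ⟨0, by norm_num⟩
    · obtain ⟨k, rfl⟩ : ∃ k, p = 24*k + 29 := ⟨p/24 - 1, by omega⟩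
      rw [leg_neg_one_eq_one (by omega), leg_neg_three_eq_neg_one hne2 (by omega)]
      exact ⟨48*k^3 + 162*k^2 + 177*k + 63, by push_cast; ring⟩
    · rw [leg_neg_one_eq_one (by omega), leg_neg_three_eq_neg_one hne2 (by omega)]
      exact ⟨0, by norm_num⟩
    · obtain ⟨k, rfl⟩ : ∃ k, p = 24*k + 29 := ⟨p/24 - 1, by omega⟩
      rw [leg_neg_one_eq_one (by omega), leg_neg_three_eq_neg_one hne2 (by omega)]
      exact ⟨48*k^3 + 162*k^2 + 177*k + 63, by push_cast; ring⟩
  · obtain ⟨k, rfl⟩ : ∃ k, p = 24*k + 7 := ⟨p/24, by omega⟩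
    rw [leg_neg_one_eq_neg_one (by omega), leg_neg_three_eq_one hne2 (by omega)]
    exact ⟨48*k^3 + 30*k^2 + k, by push_cast; ring⟩
  · obtain ⟨k, rfl⟩ : ∃ k, p = 24*k + 11 := ⟨p/24, by omega⟩
    rw [leg_neg_one_eq_neg_one (by omega), leg_neg_three_eq_neg_one hne2 (by omega)]
    exact ⟨48*k^3 + 54*k^2 + 15*k + 1, by push_cast; ring⟩
  · obtain ⟨k, rfl⟩ : ∃ k, p = 24*k + 13 := ⟨p/24, by omega⟩
    rw [leg_neg_one_eq_one (by omega), leg_neg_three_eq_one hne2 (by omega)]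
    exact ⟨48*k^3 + 66*k^2 + 25*k + 3, by push_cast; ring⟩
  · obtain ⟨k, rfl⟩ : ∃ k, p = 24*k + 17 := ⟨p/24, by omega⟩
    rw [leg_neg_one_eq_one (by omega), leg_neg_three_eq_neg_one hne2 (by omega)]
    exact ⟨48*k^3 + 90*k^2 + 51*k + 9, by push_cast; ring⟩
  · obtain ⟨k, rfl⟩ : ∃ k, p = 24*k + 19 := ⟨p/24, by omega⟩
    rw [leg_neg_one_eq_neg_one (by omega), leg_neg_three_eq_one hne2 (by omega)]
    exact ⟨48*k^3 + 102*k^2 + 67*k + 14, by push_cast; ring⟩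
  · obtain ⟨k, rfl⟩ : ∃ k, p = 24*k + 23 := ⟨p/24, by omega⟩
    rw [leg_neg_one_eq_neg_one (by omega), leg_neg_three_eq_neg_one hne2 (by omega)]
    exact ⟨48*k^3 + 126*k^2 + 105*k + 28, by push_cast; ring⟩
end
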